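/- Let T > 0, let R₁, R₂ : [0,T] → ℝ³ be continuous, and let Q₁, Q₂ : [0,T] → 3×3 real matrices be differentiable with Q_i'(t) = Q_i(t) A(R_i(t)) and Q_i(0) = Id for i = 1,2. Set M = sup_{t∈[0,T]} |R₁(t)| and δ = sup_{t∈[0,T]} |R₁(t) − R₂(t)|. Then for every t ∈ [0,T], ‖Q₁(t) − Q₂(t)‖ ≤ δ · t · e^{Mt}, where ‖·‖ denotes the operator norm on 3×3 real matrices and |·| the Euclidean norm on ℝ³. -/

import Mathlib

/-!
Since `A(ω)` is skew-symmetric, `(Q Qᵀ)' = Q A Qᵀ + Q Aᵀ Qᵀ = 0`, so `Q₂` stays orthogonal and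
`‖Q₂‖ ≤ 1`. The difference `D = Q₁ - Q₂` solves `D' = D A(R₁) + Q₂ (A(R₁) - A(R₂))`, whence
`‖D'‖ ≤ M ‖D‖ + δ` and `D(0) = 0`. Grönwall's inequality gives
`‖D(t)‖ ≤ (δ / M) (e^{Mt} - 1) ≤ δ t e^{Mt}`.
-/

noncomputable section

open Set Matrix
open scoped Matrix.Norms.L2Operator

/-- We identify ℝ³ with `EuclideanSpace ℝ (Fin 3)`. -/
local notation "E3" => EuclideanSpace ℝ (Fin 3)

/-- The skew-symmetric matrix `A(ω)` with `A(ω)x = ω × x`. -/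
def Amat (w : E3) : Matrix (Fin 3) (Fin 3) ℝ :=
  !![0, -w 2, w 1; w 2, 0, -w 0; -w 1, w 0, 0]

lemma Real.exp_sub_one_le_mul_exp (y : ℝ) : Real.exp y - 1 ≤ y * Real.exp y := by
  have h := Real.add_one_le_exp (-y)
  have hinv : Real.exp y * Real.exp (-y) = 1 := by
    rw [← Real.exp_add, add_neg_cancel, Real.exp_zero]
  nlinarith [Real.exp_pos y]

lemma gronwallBound_zero_le_mul_exp {K ε : ℝ} (hK : 0 ≤ K) (hε : 0 ≤ ε) (x : ℝ) :
    gronwallBound 0 K ε x ≤ ε * x * Real.exp (K * x) := by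
  rcases hK.eq_or_lt with rfl | hK
  · simp [gronwallBound_K0]
  · simp only [gronwallBound_of_K_ne_0 hK.ne', zero_mul, zero_add]
    rw [div_mul_eq_mul_div, div_le_iff₀ hK]
    nlinarith [mul_le_mul_of_nonneg_left (Real.exp_sub_one_le_mul_exp (K * x)) hε]

theorem HasDerivWithinAt.Ici_of_Icc {E : Type*} [NormedAddCommGroup E] [NormedSpace ℝ E]
    {f : ℝ → E} {f' : E} {a b t : ℝ} (h : HasDerivWithinAt f f' (Icc a b) t) (ht : t ∈ Ico a b) :
    HasDerivWithinAt f f' (Ici t) t :=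
  h.mono_of_mem_nhdsWithin (Icc_mem_nhdsGE_of_mem ht)

theorem norm_le_gronwallBound_of_hasDerivWithinAt_Icc {E : Type*} [NormedAddCommGroup E]
    [NormedSpace ℝ E] {f f' : ℝ → E} {a b K ε : ℝ}
    (hf : ∀ t ∈ Icc a b, HasDerivWithinAt f (f' t) (Icc a b) t)
    (bound : ∀ t ∈ Ico a b, ‖f' t‖ ≤ K * ‖f t‖ + ε) :
    ∀ t ∈ Icc a b, ‖f t‖ ≤ gronwallBound ‖f a‖ K ε (t - a) :=
  norm_le_gronwallBound_of_norm_deriv_right_le (fun t ht => (hf t ht).continuousWithinAt)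
    (fun t ht => (hf t (Ico_subset_Icc_self ht)).Ici_of_Icc ht) le_rfl bound

theorem Matrix.hasDerivWithinAt_of_entries {m n : Type*} [Fintype m] [Fintype n]
    {Q : ℝ → Matrix m n ℝ} {Q' : Matrix m n ℝ} {s : Set ℝ} {t : ℝ}
    (h : ∀ i j, HasDerivWithinAt (fun τ => Q τ i j) (Q' i j) s t) :
    HasDerivWithinAt Q Q' s t :=
  hasDerivWithinAt_pi.2 fun i => hasDerivWithinAt_pi.2 (h i)

section NormedAlgebra

variable {𝔸 : Type*} [NormedRing 𝔸] [NormedAlgebra ℝ 𝔸]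

theorem norm_sub_le_gronwallBound_of_hasDerivWithinAt_mul {Q₁ Q₂ A₁ A₂ : ℝ → 𝔸}
    {a b K C ε : ℝ}
    (hQ₁ : ∀ t ∈ Icc a b, HasDerivWithinAt Q₁ (Q₁ t * A₁ t) (Icc a b) t)
    (hQ₂ : ∀ t ∈ Icc a b, HasDerivWithinAt Q₂ (Q₂ t * A₂ t) (Icc a b) t)
    (hQ₂C : ∀ t ∈ Icc a b, ‖Q₂ t‖ ≤ C) (hA₁K : ∀ t ∈ Icc a b, ‖A₁ t‖ ≤ K)
    (hAε : ∀ t ∈ Icc a b, ‖A₁ t - A₂ t‖ ≤ ε) (h₀ : Q₁ a = Q₂ a) :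
    ∀ t ∈ Icc a b, ‖Q₁ t - Q₂ t‖ ≤ gronwallBound 0 K (C * ε) (t - a) := by
  have hderiv (t) (ht : t ∈ Icc a b) : HasDerivWithinAt (fun s => Q₁ s - Q₂ s)
      ((Q₁ t - Q₂ t) * A₁ t + Q₂ t * (A₁ t - A₂ t)) (Icc a b) t :=
    ((hQ₁ t ht).sub (hQ₂ t ht)).congr_deriv (by noncomm_ring)
  have bound (t) (ht : t ∈ Ico a b) :
      ‖(Q₁ t - Q₂ t) * A₁ t + Q₂ t * (A₁ t - A₂ t)‖ ≤ K * ‖Q₁ t - Q₂ t‖ + C * ε := by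
    have ht' := Ico_subset_Icc_self ht
    calc _ ≤ ‖Q₁ t - Q₂ t‖ * ‖A₁ t‖ + ‖Q₂ t‖ * ‖A₁ t - A₂ t‖ :=
          (norm_add_le _ _).trans (add_le_add (norm_mul_le _ _) (norm_mul_le _ _))
      _ ≤ ‖Q₁ t - Q₂ t‖ * K + C * ε := by
          gcongr
          · exact hA₁K t ht'
          · exact (norm_nonneg _).trans (hQ₂C t ht')
          · exact hQ₂C t ht'
          · exact hAε t ht'
      _ = _ := by ring
  simpa [h₀] using norm_le_gronwallBound_of_hasDerivWithinAt_Icc hderiv bound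

variable [StarRing 𝔸] [CStarRing 𝔸] [StarModule ℝ 𝔸]

theorem mul_star_eq_of_hasDerivWithinAt_mul_skew {Q A : ℝ → 𝔸} {a b : ℝ}
    (hQ : ∀ t ∈ Icc a b, HasDerivWithinAt Q (Q t * A t) (Icc a b) t)
    (hA : ∀ t ∈ Icc a b, star (A t) = -A t) :
    ∀ t ∈ Icc a b, Q t * star (Q t) = Q a * star (Q a) := by
  have hderiv (t) (ht : t ∈ Icc a b) :
      HasDerivWithinAt (fun s => Q s * star (Q s)) 0 (Icc a b) t := by
    refine ((hQ t ht).mul (hQ t ht).star).congr_deriv ?_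
    rw [star_mul, hA t ht]
    noncomm_ring
  exact constant_of_has_deriv_right_zero (fun t ht => (hderiv t ht).continuousWithinAt)
    fun t ht => (hderiv t (Ico_subset_Icc_self ht)).Ici_of_Icc ht

end NormedAlgebra

theorem CStarRing.norm_le_one_of_mul_star_eq_one {𝔸 : Type*} [NormedRing 𝔸] [StarRing 𝔸]
    [CStarRing 𝔸] {u : 𝔸} (hu : u * star u = 1) : ‖u‖ ≤ 1 := by
  have hu : ‖u‖ * ‖u‖ = ‖(1 : 𝔸)‖ := by rw [← CStarRing.norm_self_mul_star, hu]
  have h1 : ‖(1 : 𝔸)‖ * ‖(1 : 𝔸)‖ = ‖(1 : 𝔸)‖ := by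
    rw [← CStarRing.norm_self_mul_star, star_one, one_mul]
  have h1_le : ‖(1 : 𝔸)‖ ≤ 1 := by nlinarith
  nlinarith [norm_nonneg u]

lemma Amat_mulVec (w : E3) (x : Fin 3 → ℝ) : Amat w *ᵥ x = w.ofLp ⨯₃ x := by
  ext i
  fin_cases i <;> simp [Amat, cross_apply, mulVec, dotProduct, Fin.sum_univ_three] <;> ring

lemma norm_Amat_le (w : E3) : ‖Amat w‖ ≤ ‖w‖ := by
  rw [← l2_opNorm_toEuclideanCLM]
  refine ContinuousLinearMap.opNorm_le_bound _ (norm_nonneg w) fun x => ?_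
  rw [← sq_le_sq₀ (norm_nonneg _) (by positivity), mul_pow, EuclideanSpace.norm_sq_eq,
    EuclideanSpace.norm_sq_eq, EuclideanSpace.norm_sq_eq]
  simp only [ofLp_toEuclideanCLM, Amat_mulVec]
  have hsq (y : Fin 3 → ℝ) : ∑ i, ‖y i‖ ^ 2 = y ⬝ᵥ y := by simp [dotProduct, sq]
  rw [hsq, hsq, hsq, cross_dot_cross, dotProduct_comm x.ofLp w.ofLp]
  exact sub_le_self _ (mul_self_nonneg _)

lemma star_Amat (w : E3) : star (Amat w) = -Amat w := by
  ext i j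
  fin_cases i <;> fin_cases j <;> simp [Amat]

lemma Amat_sub (w v : E3) : Amat (w - v) = Amat w - Amat v := by
  ext i j
  fin_cases i <;> fin_cases j <;> simp [Amat] <;> ring

theorem statement19_general
    (T : ℝ)
    (R₁ R₂ : ℝ → E3)
    (Q₁ Q₂ : ℝ → Matrix (Fin 3) (Fin 3) ℝ)
    (hQ₁0 : Q₁ 0 = 1) (hQ₂0 : Q₂ 0 = 1)
    (hQ₁ode : ∀ t ∈ Icc (0:ℝ) T, ∀ i j,
      HasDerivWithinAt (fun s => Q₁ s i j) ((Q₁ t * Amat (R₁ t)) i j) (Icc (0:ℝ) T) t)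
    (hQ₂ode : ∀ t ∈ Icc (0:ℝ) T, ∀ i j,
      HasDerivWithinAt (fun s => Q₂ s i j) ((Q₂ t * Amat (R₂ t)) i j) (Icc (0:ℝ) T) t)
    (M : ℝ) (hM : IsLUB {d : ℝ | ∃ t ∈ Icc (0:ℝ) T, d = ‖R₁ t‖} M)
    (δ : ℝ) (hδ : IsLUB {d : ℝ | ∃ t ∈ Icc (0:ℝ) T, d = ‖R₁ t - R₂ t‖} δ) :
    ∀ t ∈ Icc (0:ℝ) T, ‖Q₁ t - Q₂ t‖ ≤ δ * t * Real.exp (M * t) := by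
  intro t ht
  have h0T : (0 : ℝ) ∈ Icc 0 T := ⟨le_rfl, ht.1.trans ht.2⟩
  have hM₀ : 0 ≤ M := (norm_nonneg _).trans (hM.1 ⟨0, h0T, rfl⟩)
  have hδ₀ : 0 ≤ δ := (norm_nonneg _).trans (hδ.1 ⟨0, h0T, rfl⟩)
  have hQ₁ (s) (hs : s ∈ Icc 0 T) := Matrix.hasDerivWithinAt_of_entries (hQ₁ode s hs)
  have hQ₂ (s) (hs : s ∈ Icc 0 T) := Matrix.hasDerivWithinAt_of_entries (hQ₂ode s hs)
  have hQ₂_le_one (s) (hs : s ∈ Icc 0 T) : ‖Q₂ s‖ ≤ 1 := by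
    refine CStarRing.norm_le_one_of_mul_star_eq_one ?_
    simpa [hQ₂0] using
      mul_star_eq_of_hasDerivWithinAt_mul_skew hQ₂ (fun s _ => star_Amat (R₂ s)) s hs
  have h := norm_sub_le_gronwallBound_of_hasDerivWithinAt_mul hQ₁ hQ₂ hQ₂_le_one
    (fun s hs => (norm_Amat_le _).trans (hM.1 ⟨s, hs, rfl⟩))
    (fun s hs => by rw [← Amat_sub]; exact (norm_Amat_le _).trans (hδ.1 ⟨s, hs, rfl⟩))
    (hQ₁0.trans hQ₂0.symm) t ht
  rw [one_mul, sub_zero] at h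
  exact h.trans (gronwallBound_zero_le_mul_exp hM₀ hδ₀ t)

/-- Let `T > 0`, `R₁, R₂ : [0,T] → ℝ³` continuous, and let
`Q₁, Q₂ : [0,T] → M₃(ℝ)` be differentiable with `Qᵢ'(t) = Qᵢ(t) A(Rᵢ(t))`, `Qᵢ(0) = Id`.
Set `M = sup_t |R₁(t)|` and `δ = sup_t |R₁(t) − R₂(t)|`.  Then for every `t ∈ [0,T]`,
`‖Q₁(t) − Q₂(t)‖ ≤ δ · t · e^{Mt}` in the operator norm on 3×3 matrices. -/
theorem statement19
    (T : ℝ) (hT : 0 < T)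
    (R₁ R₂ : ℝ → E3)
    (hR₁ : ContinuousOn R₁ (Icc 0 T)) (hR₂ : ContinuousOn R₂ (Icc 0 T))
    (Q₁ Q₂ : ℝ → Matrix (Fin 3) (Fin 3) ℝ)
    (hQ₁0 : Q₁ 0 = 1) (hQ₂0 : Q₂ 0 = 1)
    (hQ₁ode : ∀ t ∈ Icc (0:ℝ) T, ∀ i j,
      HasDerivWithinAt (fun s => Q₁ s i j) ((Q₁ t * Amat (R₁ t)) i j) (Icc (0:ℝ) T) t)
    (hQ₂ode : ∀ t ∈ Icc (0:ℝ) T, ∀ i j,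
      HasDerivWithinAt (fun s => Q₂ s i j) ((Q₂ t * Amat (R₂ t)) i j) (Icc (0:ℝ) T) t)
    (M : ℝ) (hM : IsLUB {d : ℝ | ∃ t ∈ Icc (0:ℝ) T, d = ‖R₁ t‖} M)
    (δ : ℝ) (hδ : IsLUB {d : ℝ | ∃ t ∈ Icc (0:ℝ) T, d = ‖R₁ t - R₂ t‖} δ) :
    ∀ t ∈ Icc (0:ℝ) T, ‖Q₁ t - Q₂ t‖ ≤ δ * t * Real.exp (M * t) :=
  statement19_general T R₁ R₂ Q₁ Q₂ hQ₁0 hQ₂0 hQ₁ode hQ₂ode M hM δ hδ
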